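/- arXiv:2309.14251 — 2 statements merged into one kernel-verified Lean document; each statement's English description precedes it below -/
import Mathlib

section
/- For positive integers m, n with n ≤ m, the number of equivalence classes of compositions of m into n positive parts under cyclic shift equals (1/m) · Σ_{j | gcd(m,n)} φ(j) · C(m/j, n/j), where φ is Euler's totient function. -/
/-- Cyclic shift of a tuple by `t` positions. -/
def cshift {n : ℕ} (t : ℕ) (f : Fin n → ℕ) : Fin n → ℕ :=
  fun i => f ⟨((i : ℕ) + t) % n, Nat.mod_lt _ i.pos⟩

/-!
Burnside's lemma for the translation action of a cyclic group `G` of order `n` on compositions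
of `m` indexed by `G`. A composition is fixed by `t` iff it is constant on the cosets of
`⟨t⟩`; if `t` has order `k`, such compositions are compositions of `m / k` into `n / k` parts,
so there are `C(m/k - 1, n/k - 1)` of them when `k ∣ m` and none otherwise. Since `G` has
`φ k` elements of order `k`, the number of orbits is `(1/n) ∑_{k ∣ gcd(m,n)} φ k C(m/k-1, n/k-1)`,
and `m C(m/k - 1, n/k - 1) = n C(m/k, n/k)` turns this into the stated formula.
-/

lemma Nat.mul_choose_sub_one_sub_one {a b : ℕ} (hb : 0 < b) :
    a * (a - 1).choose (b - 1) = b * a.choose b := by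
  obtain ⟨b, rfl⟩ := Nat.exists_eq_add_one.2 hb
  cases a with
  | zero => simp
  | succ a => simpa [mul_comm] using Nat.add_one_mul_choose_eq a b

lemma Nat.mul_choose_div_sub_one {m n k : ℕ} (hn : 0 < n) (hkm : k ∣ m) (hkn : k ∣ n) :
    m * (m / k - 1).choose (n / k - 1) = n * (m / k).choose (n / k) := by
  obtain ⟨a, rfl⟩ := hkm
  obtain ⟨b, rfl⟩ := hkn
  have hk : 0 < k := Nat.pos_of_mul_pos_right hn
  rw [Nat.mul_div_cancel_left _ hk, Nat.mul_div_cancel_left _ hk, mul_assoc, mul_assoc,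
    Nat.mul_choose_sub_one_sub_one (Nat.pos_of_mul_pos_left hn)]

lemma QuotientAddGroup.sum_comp_mk {G M : Type*} [AddGroup G] [Fintype G] [AddCommMonoid M]
    (H : AddSubgroup G) [Fintype (G ⧸ H)] (h : G ⧸ H → M) :
    ∑ i : G, h i = Nat.card H • ∑ q, h q := by
  classical
  rw [← Fintype.sum_fiberwise (fun i : G => (i : G ⧸ H)) (fun i => h i), Finset.smul_sum]
  refine Finset.sum_congr rfl fun q _ => ?_
  have hfib : Fintype.card {i : G // (i : G ⧸ H) = q} = Nat.card H := by
    rw [← Nat.card_eq_fintype_card]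
    exact (Nat.card_congr (QuotientAddGroup.preimageMkEquivAddSubgroupProdSet H {q})).trans
      (by simp)
  simp only [Finset.sum_congr rfl fun (i : {i : G // (i : G ⧸ H) = q}) _ => congrArg h i.2]
  rw [Finset.sum_const, Finset.card_univ, hfib]

lemma IsAddCyclic.sum_comp_addOrderOf {G M : Type*} [AddGroup G] [Fintype G] [IsAddCyclic G]
    [AddCommMonoid M] (F : ℕ → M) :
    ∑ t : G, F (addOrderOf t) = ∑ k ∈ (Fintype.card G).divisors, k.totient • F k := by
  classical
  rw [← Finset.sum_fiberwise_of_maps_to (g := addOrderOf) (t := (Fintype.card G).divisors)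
    fun t _ => Nat.mem_divisors.2 ⟨addOrderOf_dvd_card, Fintype.card_ne_zero⟩]
  refine Finset.sum_congr rfl fun k hk => ?_
  rw [Finset.sum_congr rfl fun t ht => congrArg F (Finset.mem_filter.1 ht).2, Finset.sum_const,
    IsAddCyclic.card_addOrderOf_eq_totient (Nat.dvd_of_mem_divisors hk)]

open AddAction Function

abbrev IndexedComposition (ι : Type*) [Fintype ι] (m : ℕ) :=
  {f : ι → ℕ // (∀ i, 0 < f i) ∧ ∑ i, f i = m}

namespace IndexedComposition

section Count

variable {ι : Type*} [Fintype ι] {s : ℕ}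

def addOneEquiv (h : Fintype.card ι ≤ s) :
    {g : ι → ℕ // ∑ i, g i = s - Fintype.card ι} ≃ IndexedComposition ι s where
  toFun g := ⟨fun i => g.1 i + 1, fun _ => Nat.succ_pos _, by
    simp [Finset.sum_add_distrib, g.2, Nat.sub_add_cancel h]⟩
  invFun f := ⟨fun i => f.1 i - 1, by
    have hsub : ∑ i, (f.1 i - 1) + ∑ _i : ι, 1 = s := by
      rw [← Finset.sum_add_distrib]
      exact (Finset.sum_congr rfl fun i _ => Nat.sub_add_cancel (f.2.1 i)).trans f.2.2
    simp only [Finset.sum_const, Finset.card_univ, smul_eq_mul, mul_one] at hsub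
    show ∑ i, (f.1 i - 1) = _
    omega⟩
  left_inv g := by ext i; simp
  right_inv f := by ext i; exact Nat.sub_add_cancel (f.2.1 i)

lemma card_index_le (f : IndexedComposition ι s) : Fintype.card ι ≤ s := by
  simpa [← f.2.2] using Finset.card_nsmul_le_sum Finset.univ f.1 1 fun i _ => f.2.1 i

lemma apply_le (f : IndexedComposition ι s) (i : ι) : f.1 i ≤ s :=
  (Finset.single_le_sum (fun j _ => Nat.zero_le (f.1 j)) (Finset.mem_univ i)).trans_eq f.2.2

instance : Finite (IndexedComposition ι s) :=
  Finite.of_injective (fun f i => (⟨f.1 i, Nat.lt_succ_of_le (apply_le f i)⟩ : Fin (s + 1)))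
    fun _ _ h => Subtype.ext (funext fun i => congrArg Fin.val (congrFun h i))

theorem card_eq_choose [Nonempty ι] (hs : 0 < s) :
    Nat.card (IndexedComposition ι s) = (s - 1).choose (Fintype.card ι - 1) := by
  classical
  have hd : 0 < Fintype.card ι := Fintype.card_pos
  by_cases h : Fintype.card ι ≤ s
  · rw [← Nat.card_congr (addOneEquiv h), ← Nat.card_congr (Sym.equivNatSumOfFintype ι _),
      Sym.natCard_sym_eq_choose, Nat.card_eq_fintype_card,
      show Fintype.card ι + (s - Fintype.card ι) - 1 = s - 1 by omega]
    exact Nat.choose_symm_of_eq_add (by omega)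
  · have : IsEmpty (IndexedComposition ι s) := ⟨fun f => h (card_index_le f)⟩
    rw [Nat.card_of_isEmpty, Nat.choose_eq_zero_of_lt (by omega)]

end Count

section Translation

variable {G : Type*} [AddGroup G] [Fintype G] {m : ℕ}

instance : AddAction G (IndexedComposition G m) where
  vadd t f := ⟨fun i => f.1 (i + t), fun _ => f.2.1 _,
    (Equiv.sum_comp (Equiv.addRight t) f.1).trans f.2.2⟩
  zero_vadd f := by ext i; simp [HVAdd.hVAdd]
  add_vadd s t f := by ext i; simp [HVAdd.hVAdd, add_assoc]

lemma mem_fixedBy_iff_periodic {t : G} {f : IndexedComposition G m} :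
    f ∈ fixedBy (IndexedComposition G m) t ↔ Periodic f.1 t := by
  rw [mem_fixedBy, Subtype.ext_iff, funext_iff]
  rfl

def fixedByEquiv (t : G) [Fintype (G ⧸ AddSubgroup.zmultiples t)] :
    fixedBy (IndexedComposition G m) t ≃
      {h : G ⧸ AddSubgroup.zmultiples t → ℕ // (∀ q, 0 < h q) ∧ addOrderOf t * ∑ q, h q = m} where
  toFun f := ⟨(mem_fixedBy_iff_periodic.1 f.2).lift, fun q => q.inductionOn' fun i => f.1.2.1 i, by
    rw [← Nat.card_zmultiples, ← smul_eq_mul, ← QuotientAddGroup.sum_comp_mk]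
    exact f.1.2.2⟩
  invFun h := ⟨⟨fun i => h.1 i, fun i => h.2.1 _, by
    rw [QuotientAddGroup.sum_comp_mk (h := h.1), Nat.card_zmultiples]
    exact h.2.2⟩,
    mem_fixedBy_iff_periodic.2 fun i => by
      simp [QuotientAddGroup.mk_add_of_mem i (AddSubgroup.mem_zmultiples t)]⟩
  left_inv f := rfl
  right_inv h := Subtype.ext (funext fun q => q.inductionOn' fun _ => rfl)

lemma card_fixedBy (t : G) (hm : 0 < m) :
    Nat.card (fixedBy (IndexedComposition G m) t) =
      if addOrderOf t ∣ m then
        (m / addOrderOf t - 1).choose (Fintype.card G / addOrderOf t - 1) else 0 := by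
  classical
  have hk : 0 < addOrderOf t := addOrderOf_pos t
  rw [Nat.card_congr (fixedByEquiv t)]
  split_ifs with hkm
  · obtain ⟨s, rfl⟩ := hkm
    have e : {h : G ⧸ AddSubgroup.zmultiples t → ℕ //
          (∀ q, 0 < h q) ∧ addOrderOf t * ∑ q, h q = addOrderOf t * s} ≃
        IndexedComposition (G ⧸ AddSubgroup.zmultiples t) s :=
      Equiv.subtypeEquivRight fun h => by rw [Nat.mul_left_cancel_iff hk]
    have hcard : Fintype.card (G ⧸ AddSubgroup.zmultiples t) = Fintype.card G / addOrderOf t := by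
      rw [← Nat.card_eq_fintype_card, ← Nat.card_eq_fintype_card, ← AddSubgroup.index_eq_card,
        ← AddSubgroup.card_mul_index (AddSubgroup.zmultiples t), Nat.card_zmultiples,
        Nat.mul_div_cancel_left _ hk]
    rw [Nat.card_congr e, card_eq_choose (Nat.pos_of_mul_pos_left hm), hcard,
      Nat.mul_div_cancel_left _ hk]
  · have : IsEmpty {h : G ⧸ AddSubgroup.zmultiples t → ℕ //
        (∀ q, 0 < h q) ∧ addOrderOf t * ∑ q, h q = m} :=
      ⟨fun h => hkm ⟨_, h.2.2.symm⟩⟩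
    exact Nat.card_of_isEmpty

theorem card_orbitRel_quotient_mul_card [IsAddCyclic G] (hm : 0 < m) :
    Nat.card (orbitRel.Quotient G (IndexedComposition G m)) * Fintype.card G =
      ∑ k ∈ (m.gcd (Fintype.card G)).divisors,
        k.totient * (m / k - 1).choose (Fintype.card G / k - 1) := by
  classical
  have : Fintype (IndexedComposition G m) := Fintype.ofFinite _
  rw [Nat.card_eq_fintype_card, ← sum_card_fixedBy_eq_card_orbits_mul_card_addGroup,
    Finset.sum_congr rfl fun t _ => Nat.card_eq_fintype_card.symm.trans (card_fixedBy t hm),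
    IsAddCyclic.sum_comp_addOrderOf
      fun k => if k ∣ m then (m / k - 1).choose (Fintype.card G / k - 1) else 0,
    ← Nat.divisors_filter_dvd_of_dvd Fintype.card_ne_zero (Nat.gcd_dvd_right m _),
    Finset.sum_filter]
  refine Finset.sum_congr rfl fun k hk => ?_
  simp only [smul_eq_mul, mul_ite, mul_zero, Nat.dvd_gcd_iff,
    and_iff_left (Nat.dvd_of_mem_divisors hk)]

theorem mul_card_orbitRel_quotient [IsAddCyclic G] (hm : 0 < m) :
    m * Nat.card (orbitRel.Quotient G (IndexedComposition G m)) =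
      ∑ k ∈ (m.gcd (Fintype.card G)).divisors, k.totient * (m / k).choose (Fintype.card G / k) := by
  have hG : 0 < Fintype.card G := Fintype.card_pos
  refine Nat.eq_of_mul_eq_mul_left hG ?_
  rw [mul_left_comm, mul_comm (Fintype.card G), card_orbitRel_quotient_mul_card hm,
    Finset.mul_sum, Finset.mul_sum]
  refine Finset.sum_congr rfl fun k hk => ?_
  obtain ⟨hkm, hkn⟩ := Nat.dvd_gcd_iff.1 (Nat.dvd_of_mem_divisors hk)
  rw [mul_left_comm, Nat.mul_choose_div_sub_one hG hkm hkn, mul_left_comm]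

end Translation

end IndexedComposition

instance Fin.isAddCyclic (n : ℕ) [NeZero n] : IsAddCyclic (Fin n) :=
  (ZMod.finEquiv n).toAddEquiv.isAddCyclic.2 inferInstance

open Fin.NatCast in
lemma cshift_apply {n : ℕ} [NeZero n] (t : ℕ) (f : Fin n → ℕ) (i : Fin n) :
    cshift t f i = f (i + (t : Fin n)) := by
  simp only [cshift]
  congr 1
  ext
  simp [Fin.val_add]

open Fin.NatCast in
lemma exists_cshift_eq_iff_orbitRel {m n : ℕ} [NeZero n] (f g : IndexedComposition (Fin n) m) :
    (∃ t, g.1 = cshift t f.1) ↔ orbitRel (Fin n) _ f g := by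
  rw [orbitRel_apply, mem_orbit_symm]
  constructor
  · rintro ⟨t, h⟩
    exact ⟨t, Subtype.ext (funext fun i => by rw [h, cshift_apply]; rfl)⟩
  · rintro ⟨s, rfl⟩
    exact ⟨s.val, funext fun i => by rw [cshift_apply, Fin.cast_val_eq_self]; rfl⟩

theorem knopfmacher_robbins_general (m n : ℕ) (hn : 0 < n) :
    (Nat.card (Quot (fun f g : {f : Fin n → ℕ // (∀ i, 0 < f i) ∧ ∑ i, f i = m} =>
        ∃ t, g.val = cshift t f.val)) : ℚ) =
      (1 / m) * ∑ j ∈ (m.gcd n).divisors,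
        (j.totient : ℚ) * ((m / j).choose (n / j) : ℚ) := by
  have : NeZero n := ⟨hn.ne'⟩
  rw [Nat.card_congr (Quot.congrRight exists_cshift_eq_iff_orbitRel)]
  rcases m.eq_zero_or_pos with rfl | hm
  · have : IsEmpty (IndexedComposition (Fin n) 0) :=
      ⟨fun f => hn.ne' (Nat.le_zero.1 (by simpa using IndexedComposition.card_index_le f))⟩
    simp
  · have h := IndexedComposition.mul_card_orbitRel_quotient (G := Fin n) hm
    rw [Fintype.card_fin] at h
    rw [eq_comm, one_div, inv_mul_eq_iff_eq_mul₀ (by positivity)]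
    exact_mod_cast h.symm

theorem knopfmacher_robbins (m n : ℕ) (hn : 0 < n) (hnm : n ≤ m) :
    (Nat.card (Quot (fun f g : {f : Fin n → ℕ // (∀ i, 0 < f i) ∧ ∑ i, f i = m} =>
        ∃ t, g.val = cshift t f.val)) : ℚ) =
      (1 / m) * ∑ j ∈ (m.gcd n).divisors,
        (j.totient : ℚ) * ((m / j).choose (n / j) : ℚ) :=
  knopfmacher_robbins_general m n hn
end

section
/- Let p be prime and let ⟨m over p⟩ denote the number of cyclic-shift equivalence classes of compositions of m into p positive parts (set to 0 if m < p). Then for every k ≥ 1, ⟨(k+p) over p⟩ − ⟨k over p⟩ = (1/p)·[C(k+p−1, p−1) − C(k−1, p−1)]. -/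
/-- Number of cyclic-shift equivalence classes of compositions of `m` into `n` positive parts. -/
noncomputable def cyclicCompositionClasses (m n : ℕ) : ℕ :=
  Nat.card (Quot (fun f g : {f : Fin n → ℕ // (∀ i, 0 < f i) ∧ ∑ i, f i = m} =>
    ∃ t, g.val = cshift t f.val))

open Finset

section count

/-- Tuples with given sum are equivalent to multisets. -/
def tupleSymEquiv (n s : ℕ) : {g : Fin n → ℕ // ∑ i, g i = s} ≃ Sym (Fin n) s where
  toFun g := ⟨∑ i : Fin n, (g.1 i) • ({i} : Multiset (Fin n)), by
    rw [show (Multiset.card : Multiset (Fin n) → ℕ)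
        = ⇑(⟨⟨Multiset.card, Multiset.card_zero⟩, Multiset.card_add⟩ :
          Multiset (Fin n) →+ ℕ) from rfl, map_sum]
    simp [g.2]⟩
  invFun μ := ⟨fun i => Multiset.count i μ.1, by
    rw [Multiset.sum_count_eq_card (fun a _ => Finset.mem_univ a)]
    exact μ.2⟩
  left_inv g := by
    ext i
    simp only
    rw [show (Multiset.count i : Multiset (Fin n) → ℕ)
        = ⇑(Multiset.countAddMonoidHom i) from rfl, map_sum]
    simp [Multiset.count_singleton]
  right_inv μ := by
    apply Subtype.ext
    simp only [Sym.coe_mk]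
    rw [← Finset.sum_subset (Finset.subset_univ (μ.1 : Multiset (Fin n)).toFinset)
      (fun x _ hx => by
        rw [Multiset.count_eq_zero_of_notMem (by simpa using hx), zero_smul])]
    exact Multiset.toFinset_sum_count_nsmul_eq _

instance (n s : ℕ) : Finite {g : Fin n → ℕ // ∑ i, g i = s} :=
  Finite.of_equiv _ (tupleSymEquiv n s).symm

lemma card_tuples (n s : ℕ) :
    Nat.card {g : Fin n → ℕ // ∑ i, g i = s} = (n + s - 1).choose s := by
  rw [Nat.card_congr (tupleSymEquiv n s), Nat.card_eq_fintype_card,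
    Sym.card_sym_eq_choose, Fintype.card_fin]

/-- Positive tuples with sum `m` correspond to tuples with sum `m - n`. -/
def posTupleEquiv (n m : ℕ) (h : n ≤ m) :
    {f : Fin n → ℕ // (∀ i, 0 < f i) ∧ ∑ i, f i = m} ≃ {g : Fin n → ℕ // ∑ i, g i = m - n} where
  toFun f := ⟨fun i => f.1 i - 1, by
    obtain ⟨hpos, hsum⟩ := f.2
    have h1 : ∑ i, f.1 i = ∑ i, ((f.1 i - 1) + 1) := by
      refine Finset.sum_congr rfl fun i _ => (Nat.succ_pred_eq_of_pos (hpos i)).symm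
    rw [Finset.sum_add_distrib] at h1
    simp only [Finset.sum_const, Finset.card_univ, Fintype.card_fin, smul_eq_mul,
      mul_one] at h1
    show ∑ i, (f.1 i - 1) = m - n
    omega⟩
  invFun g := ⟨fun i => g.1 i + 1, fun i => Nat.succ_pos _, by
    rw [Finset.sum_add_distrib, g.2]
    simp only [Finset.sum_const, Finset.card_univ, Fintype.card_fin, smul_eq_mul, mul_one]
    omega⟩
  left_inv f := by
    apply Subtype.ext; funext i
    exact Nat.succ_pred_eq_of_pos (f.2.1 i)
  right_inv g := by
    apply Subtype.ext; funext i
    simp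

instance compFinite (n m : ℕ) : Finite {f : Fin n → ℕ // (∀ i, 0 < f i) ∧ ∑ i, f i = m} := by
  have hb : ∀ f : {f : Fin n → ℕ // (∀ i, 0 < f i) ∧ ∑ i, f i = m}, ∀ i, f.1 i < m + 1 := by
    intro f i
    have := Finset.single_le_sum (f := f.1) (fun j _ => Nat.zero_le _) (Finset.mem_univ i)
    rw [f.2.2] at this
    omega
  exact Finite.of_injective
    (fun f => (fun i => (⟨f.1 i, hb f i⟩ : Fin (m + 1)) : Fin n → Fin (m + 1)))
    (fun f g h => Subtype.ext (funext fun i => congrArg Fin.val (congrFun h i)))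

lemma card_comp (p m : ℕ) (hp : 2 ≤ p) :
    Nat.card {f : Fin p → ℕ // (∀ i, 0 < f i) ∧ ∑ i, f i = m} = (m - 1).choose (p - 1) := by
  rcases le_or_gt p m with h | h
  · rw [Nat.card_congr (posTupleEquiv p m h), card_tuples,
      show p + (m - p) - 1 = m - 1 by omega,
      show m - p = (m - 1) - (p - 1) by omega,
      Nat.choose_symm (by omega)]
  · have he : IsEmpty {f : Fin p → ℕ // (∀ i, 0 < f i) ∧ ∑ i, f i = m} := by
      constructor
      rintro ⟨f, hpos, hsum⟩
      have : (p : ℕ) ≤ ∑ i, f i := by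
        calc (p : ℕ) = ∑ _i : Fin p, 1 := by simp
        _ ≤ ∑ i, f i := Finset.sum_le_sum fun i _ => hpos i
      omega
    rw [Nat.card_of_isEmpty]
    rw [eq_comm, Nat.choose_eq_zero_iff]
    omega

end count

section action

lemma cshift_zero {n : ℕ} (f : Fin n → ℕ) : cshift 0 f = f := by
  funext i
  show f _ = f i
  congr 1
  exact Fin.ext (by simp [Nat.mod_eq_of_lt i.isLt])

lemma cshift_cshift {n : ℕ} (s t : ℕ) (f : Fin n → ℕ) :
    cshift s (cshift t f) = cshift (t + s) f := by
  funext i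
  show f _ = f _
  congr 1
  apply Fin.ext
  show (((i : ℕ) + s) % n + t) % n = ((i : ℕ) + (t + s)) % n
  rw [Nat.mod_add_mod, Nat.add_right_comm, Nat.add_assoc]

lemma cshift_mod {n : ℕ} (t : ℕ) (f : Fin n → ℕ) : cshift t f = cshift (t % n) f := by
  funext i
  show f _ = f _
  congr 1
  apply Fin.ext
  show ((i : ℕ) + t) % n = ((i : ℕ) + t % n) % n
  conv_lhs => rw [Nat.add_mod]
  conv_rhs => rw [Nat.add_mod]
  rw [Nat.mod_mod_of_dvd t dvd_rfl]

lemma shiftIdx_bijective {p : ℕ} (t : ℕ) :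
    Function.Bijective (fun i : Fin p => (⟨((i : ℕ) + t) % p, Nat.mod_lt _ i.pos⟩ : Fin p)) := by
  rw [← Finite.injective_iff_bijective]
  intro i j h
  have h3 : ((i : ℕ) + t) % p = ((j : ℕ) + t) % p := congrArg Fin.val h
  have h2 : (i : ℕ) % p = (j : ℕ) % p := Nat.ModEq.add_right_cancel' t h3
  exact Fin.ext (by rwa [Nat.mod_eq_of_lt i.isLt, Nat.mod_eq_of_lt j.isLt] at h2)

lemma sum_cshift {p : ℕ} (t : ℕ) (f : Fin p → ℕ) : ∑ i, cshift t f i = ∑ i, f i :=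
  Function.Bijective.sum_comp (shiftIdx_bijective t) f

/-- The compositions of `m` into `p` positive parts. -/
abbrev PComp (p m : ℕ) : Type := {f : Fin p → ℕ // (∀ i, 0 < f i) ∧ ∑ i, f i = m}

instance pcompAction (p m : ℕ) [NeZero p] : AddAction (ZMod p) (PComp p m) where
  vadd c f := ⟨cshift c.val f.1, fun i => f.2.1 _, by rw [sum_cshift]; exact f.2.2⟩
  zero_vadd f := Subtype.ext (by
    show cshift (ZMod.val (0 : ZMod p)) f.1 = f.1
    rw [ZMod.val_zero, cshift_zero])
  add_vadd a b f := Subtype.ext (by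
    show cshift ((a + b).val) f.1 = cshift a.val (cshift b.val f.1)
    rw [cshift_cshift, ZMod.val_add,
      show (ZMod.val a + ZMod.val b) % p = (ZMod.val b + ZMod.val a) % p by rw [Nat.add_comm]]
    exact (cshift_mod _ _).symm)

lemma pcomp_vadd_def {p m : ℕ} [NeZero p] (c : ZMod p) (f : PComp p m) :
    (c +ᵥ f).1 = cshift c.val f.1 := rfl

lemma pcomp_const {p m : ℕ} [NeZero p] (hp : p.Prime) (a : ZMod p) (ha : a ≠ 0)
    (x : PComp p m) (hx : a +ᵥ x = x) (i j : Fin p) : x.1 i = x.1 j := by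
  haveI : Fact p.Prime := ⟨hp⟩
  have hiter : ∀ n : ℕ, cshift (n * a.val) x.1 = x.1 := by
    intro n
    induction n with
    | zero => simpa using cshift_zero x.1
    | succ n ih =>
      have h4 : cshift a.val (cshift (n * a.val) x.1) = cshift (n * a.val + a.val) x.1 :=
        cshift_cshift _ _ _
      have hx1 : cshift a.val x.1 = x.1 := congrArg Subtype.val hx
      rw [ih, hx1] at h4
      rw [show (n + 1) * a.val = n * a.val + a.val by ring]
      exact h4.symm
  set n : ℕ := ((((j : ℕ) : ZMod p) - ((i : ℕ) : ZMod p)) * a⁻¹).val with hn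
  have h3 := congrFun (hiter n) i
  have hidx : (((i : ℕ) + n * a.val) % p) = (j : ℕ) := by
    have hcast : ((((i : ℕ) + n * a.val : ℕ)) : ZMod p) = ((j : ℕ) : ZMod p) := by
      push_cast
      rw [hn, ZMod.natCast_rightInverse _, ZMod.natCast_rightInverse _,
        mul_assoc, inv_mul_cancel₀ ha, mul_one]
      ring
    have h5 := congrArg ZMod.val hcast
    rwa [ZMod.val_natCast, ZMod.val_natCast, Nat.mod_eq_of_lt j.isLt] at h5
  exact h3.symm.trans (congrArg x.1 (Fin.ext hidx))

lemma pcomp_const_sum {p m : ℕ} (x : PComp p m) (hc : ∀ i j : Fin p, x.1 i = x.1 j)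
    (i0 : Fin p) : p * x.1 i0 = m := by
  have h : ∑ j, x.1 j = p * x.1 i0 := by
    calc ∑ j, x.1 j = ∑ _j : Fin p, x.1 i0 := Finset.sum_congr rfl (fun j _ => hc j i0)
    _ = p * x.1 i0 := by simp [Finset.sum_const, Finset.card_univ, mul_comm]
  rw [← h]
  exact x.2.2

end action

lemma key_count (p : ℕ) (hp : p.Prime) (m : ℕ) (hm : 1 ≤ m) :
    cyclicCompositionClasses m p * p
      = (m - 1).choose (p - 1) + (p - 1) * (if p ∣ m then 1 else 0) := by
  haveI : Fact p.Prime := ⟨hp⟩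
  haveI : NeZero p := ⟨hp.pos.ne'⟩
  -- identify the quotient with the orbit quotient
  have e : Quot (fun f g : PComp p m => ∃ t, g.val = cshift t f.val)
      ≃ Quotient (AddAction.orbitRel (ZMod p) (PComp p m)) := by
    apply Quot.congrRight
    intro f g
    constructor
    · rintro ⟨t, ht⟩
      have hc : ((t : ZMod p)) +ᵥ f = g := by
        apply Subtype.ext
        rw [pcomp_vadd_def, ZMod.val_natCast, ← cshift_mod, ← ht]
      show f ∈ AddAction.orbit (ZMod p) g
      refine ⟨-(t : ZMod p), ?_⟩
      show (-(t : ZMod p)) +ᵥ g = f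
      rw [← hc, ← add_vadd, neg_add_cancel, zero_vadd]
    · rintro ⟨c, hc⟩
      have hc' : c +ᵥ g = f := hc
      refine ⟨(-c).val, ?_⟩
      have : g = (-c) +ᵥ f := by
        rw [← hc', ← add_vadd, neg_add_cancel, zero_vadd]
      rw [this, pcomp_vadd_def]
  -- fixed points of nonzero shifts
  have h1 : ∀ a : ZMod p, a ≠ 0 →
      Nat.card (AddAction.fixedBy (PComp p m) a) = if p ∣ m then 1 else 0 := by
    intro a ha
    by_cases hd : p ∣ m
    · rw [if_pos hd]
      rw [Nat.card_eq_one_iff_unique]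
      constructor
      · constructor
        rintro ⟨x, hx⟩ ⟨y, hy⟩
        have hxc := pcomp_const hp a ha x hx
        have hyc := pcomp_const hp a ha y hy
        have hx0 := pcomp_const_sum x hxc
        have hy0 := pcomp_const_sum y hyc
        apply Subtype.ext; apply Subtype.ext; funext i
        have : p * x.1 i = p * y.1 i := by rw [hx0 i, hy0 i]
        exact Nat.eq_of_mul_eq_mul_left hp.pos this
      · have hple : p ≤ m := Nat.le_of_dvd hm hd
        refine ⟨⟨⟨fun _ => m / p, fun i => Nat.div_pos hple hp.pos, ?_⟩, ?_⟩⟩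
        · rw [Finset.sum_const, Finset.card_univ, Fintype.card_fin, smul_eq_mul]
          exact Nat.mul_div_cancel' hd
        · show a +ᵥ _ = _
          apply Subtype.ext
          rw [pcomp_vadd_def]
          funext i
          rfl
    · rw [if_neg hd, Nat.card_eq_zero]
      left
      constructor
      rintro ⟨x, hx⟩
      exact hd ⟨x.1 0, (pcomp_const_sum x (pcomp_const hp a ha x hx) 0).symm⟩
  -- Burnside
  letI : Fintype (PComp p m) := Fintype.ofFinite _
  letI : ∀ a : ZMod p, Fintype (AddAction.fixedBy (PComp p m) a) := fun _ => Fintype.ofFinite _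
  letI : Fintype (Quotient (AddAction.orbitRel (ZMod p) (PComp p m))) := Fintype.ofFinite _
  have hb := AddAction.sum_card_fixedBy_eq_card_orbits_mul_card_addGroup (ZMod p) (PComp p m)
  rw [ZMod.card] at hb
  have hcc : cyclicCompositionClasses m p
      = Fintype.card (Quotient (AddAction.orbitRel (ZMod p) (PComp p m))) := by
    rw [cyclicCompositionClasses, Nat.card_congr e, Nat.card_eq_fintype_card]
  rw [hcc, ← hb]
  -- compute the sum of fixed points
  rw [← Finset.add_sum_erase Finset.univ _ (Finset.mem_univ (0 : ZMod p))]
  have hz : Fintype.card (AddAction.fixedBy (PComp p m) (0 : ZMod p)) = (m - 1).choose (p - 1) := by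
    rw [← Nat.card_eq_fintype_card, ← card_comp p m hp.two_le]
    apply Nat.card_congr
    have : AddAction.fixedBy (PComp p m) (0 : ZMod p) = Set.univ :=
      Set.eq_univ_of_forall (fun x => zero_vadd _ x)
    rw [this]
    exact Equiv.Set.univ _
  have hrest : ∑ a ∈ Finset.univ.erase (0 : ZMod p),
      Fintype.card (AddAction.fixedBy (PComp p m) a) = (p - 1) * (if p ∣ m then 1 else 0) := by
    rw [Finset.sum_congr rfl (fun a ha => by
      rw [← Nat.card_eq_fintype_card, h1 a (Finset.mem_erase.1 ha).1])]
    rw [Finset.sum_const, smul_eq_mul, Finset.card_erase_of_mem (Finset.mem_univ _),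
      Finset.card_univ, ZMod.card]
  rw [hz, hrest]

theorem cyclic_classes_difference (p : ℕ) (hp : p.Prime) (k : ℕ) (hk : 1 ≤ k) :
    (cyclicCompositionClasses (k + p) p : ℚ) - (cyclicCompositionClasses k p : ℚ) =
      (1 / (p : ℚ)) * (((k + p - 1).choose (p - 1) : ℚ) - ((k - 1).choose (p - 1) : ℚ)) := by
  have h1 := key_count p hp k hk
  have h2 := key_count p hp (k + p) (by omega)
  have hdvd : (p ∣ k + p) ↔ (p ∣ k) := by
    constructor
    · intro h
      have h' := Nat.dvd_sub h (dvd_refl p)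
      simpa using h'
    · intro h
      exact Nat.dvd_add h (dvd_refl p)
  simp only [hdvd] at h2
  set E : ℕ := (p - 1) * (if p ∣ k then 1 else 0) with hE
  have q1 := congrArg (Nat.cast : ℕ → ℚ) h1
  have q2 := congrArg (Nat.cast : ℕ → ℚ) h2
  push_cast at q1 q2
  have hp0 : (p : ℚ) ≠ 0 := Nat.cast_ne_zero.2 hp.pos.ne'
  field_simp
  linarith [q1, q2]
end
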